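/- arXiv:1012.5656 — 3 statements merged into one kernel-verified Lean document; each statement's English description precedes it below -/
import Mathlib

section
/- Let h > 0 and let φ : ℝ → ℝ be continuously differentiable on a neighborhood of [−h, 0]. Then ∫_{−h}^{0} φ(z)⁶ dz ≤ 2h·φ(0)⁶ + 9h²·∫_{−h}^{0} φ(z)⁴ φ′(z)² dz. -/
/-! For `F = φ³`, the fundamental theorem of calculus and Cauchy–Schwarz on `[z, 0]` give
`F(z)² ≤ 2 F(0)² + 2 |z| ∫_{-h}^0 F'²`; integrating in `z` over `[-h, 0]` yields the Poincaré
inequality `∫ F² ≤ 2h F(0)² + h² ∫ F'²`, which is the claim since `F'² = 9 φ⁴ φ'²`. -/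

open MeasureTheory intervalIntegral Set

theorem sq_intervalIntegral_le_mul_intervalIntegral_sq {f : ℝ → ℝ} {a b : ℝ} (hab : a ≤ b)
    (hf : IntervalIntegrable f volume a b)
    (hf2 : IntervalIntegrable (fun x => f x ^ 2) volume a b) :
    (∫ x in a..b, f x) ^ 2 ≤ (b - a) * ∫ x in a..b, f x ^ 2 := by
  rcases hab.eq_or_lt with rfl | hlt
  · simp
  have hpos : 0 < b - a := sub_pos.2 hlt
  have jensen : (⨍ x in a..b, f x) ^ 2 ≤ ⨍ x in a..b, f x ^ 2 :=
    (even_two.convexOn_pow (𝕜 := ℝ)).map_set_average_le (continuous_pow 2).continuousOn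
      isClosed_univ (by simp [hpos.ne']) (by simp) (by simp) hf.def' hf2.def'
  rw [interval_average_eq_div, interval_average_eq_div, div_pow,
    div_le_div_iff₀ (by positivity) hpos] at jensen
  nlinarith

theorem sq_sub_le_mul_intervalIntegral_sq_deriv {f f' : ℝ → ℝ} {a b : ℝ} (hab : a ≤ b)
    (hf : ∀ x ∈ Icc a b, HasDerivAt f (f' x) x) (hf' : ContinuousOn f' (Icc a b)) :
    (f b - f a) ^ 2 ≤ (b - a) * ∫ x in a..b, f' x ^ 2 := by
  rw [← uIcc_of_le hab] at hf hf'
  rw [← integral_eq_sub_of_hasDerivAt hf hf'.intervalIntegrable]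
  exact sq_intervalIntegral_le_mul_intervalIntegral_sq hab hf'.intervalIntegrable
    (hf'.pow 2).intervalIntegrable

theorem intervalIntegral_sq_le_of_hasDerivAt {f f' : ℝ → ℝ} {a b : ℝ} (hab : a ≤ b)
    (hf : ∀ x ∈ Icc a b, HasDerivAt f (f' x) x) (hf' : ContinuousOn f' (Icc a b)) :
    ∫ x in a..b, f x ^ 2 ≤ 2 * (b - a) * f b ^ 2 + (b - a) ^ 2 * ∫ x in a..b, f' x ^ 2 := by
  set K := ∫ x in a..b, f' x ^ 2
  have hf'_sq : IntervalIntegrable (fun x => f' x ^ 2) volume a b :=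
    ((uIcc_of_le hab).symm ▸ hf'.pow 2).intervalIntegrable
  have pointwise : ∀ z ∈ Icc a b, f z ^ 2 ≤ 2 * f b ^ 2 + 2 * K * (b - z) := by
    intro z hz
    have hsub : Icc z b ⊆ Icc a b := Icc_subset_Icc_left hz.1
    have hcs := sq_sub_le_mul_intervalIntegral_sq_deriv hz.2 (fun x hx => hf x (hsub hx))
      (hf'.mono hsub)
    have hK : ∫ x in z..b, f' x ^ 2 ≤ K :=
      integral_mono_interval hz.1 hz.2 le_rfl (.of_forall fun x => sq_nonneg _) hf'_sq
    nlinarith [sq_nonneg (2 * f b - f z), mul_le_mul_of_nonneg_left hK (sub_nonneg.2 hz.2)]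
  have hf_cont : ContinuousOn f (uIcc a b) :=
    fun x hx => (hf x (uIcc_of_le hab ▸ hx)).continuousAt.continuousWithinAt
  calc ∫ x in a..b, f x ^ 2 ≤ ∫ x in a..b, (2 * f b ^ 2 + 2 * K * (b - x)) :=
        integral_mono_on hab (hf_cont.pow 2).intervalIntegrable
          ((by fun_prop : Continuous fun x => 2 * f b ^ 2 + 2 * K * (b - x)).intervalIntegrable _ _)
          pointwise
    _ = 2 * (b - a) * f b ^ 2 + (b - a) ^ 2 * K := by
        rw [intervalIntegral.integral_add intervalIntegrable_const
          ((by fun_prop : Continuous fun x => 2 * K * (b - x)).intervalIntegrable _ _),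
          intervalIntegral.integral_const, intervalIntegral.integral_const_mul,
          integral_comp_sub_left (fun x => x), integral_id]
        simp only [smul_eq_mul, sub_self]
        ring

/-- One-dimensional `L⁶` Poincaré-type inequality (P-6):
for `φ` continuously differentiable on a neighborhood of `[-h, 0]`,
`∫_{-h}^0 φ⁶ ≤ 2h φ(0)⁶ + 9h² ∫_{-h}^0 φ⁴ (φ')²`. -/
theorem stmt_2 (h : ℝ) (hh : 0 < h) (φ : ℝ → ℝ) (U : Set ℝ) (hU : IsOpen U)
    (hUsub : Set.Icc (-h) 0 ⊆ U) (hφ : ContDiffOn ℝ 1 φ U) :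
    (∫ z in (-h)..0, (φ z) ^ 6) ≤
      2 * h * (φ 0) ^ 6 + 9 * h ^ 2 * ∫ z in (-h)..0, (φ z) ^ 4 * (deriv φ z) ^ 2 := by
  have hφ' : ∀ x ∈ U, HasDerivAt φ (deriv φ x) x := fun x hx =>
    ((hφ.differentiableOn one_ne_zero).differentiableAt (hU.mem_nhds hx)).hasDerivAt
  have hcube : ∀ x ∈ Icc (-h) 0, HasDerivAt (fun y => φ y ^ 3) (3 * φ x ^ 2 * deriv φ x) x :=
    fun x hx => by simpa [mul_comm] using (hφ' x (hUsub hx)).fun_pow 3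
  have hcube' : ContinuousOn (fun x => 3 * φ x ^ 2 * deriv φ x) (Icc (-h) 0) :=
    ((continuousOn_const.mul (hφ.continuousOn.pow 2)).mul
      (hφ.continuousOn_deriv_of_isOpen hU le_rfl)).mono hUsub
  calc ∫ z in (-h)..0, φ z ^ 6 = ∫ z in (-h)..0, (φ z ^ 3) ^ 2 := by simp_rw [← pow_mul]
    _ ≤ 2 * (0 - -h) * (φ 0 ^ 3) ^ 2 +
          (0 - -h) ^ 2 * ∫ z in (-h)..0, (3 * φ z ^ 2 * deriv φ z) ^ 2 :=
        intervalIntegral_sq_le_of_hasDerivAt (by linarith) hcube hcube'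
    _ = 2 * h * φ 0 ^ 6 + 9 * h ^ 2 * ∫ z in (-h)..0, φ z ^ 4 * deriv φ z ^ 2 := by
        simp_rw [mul_pow, ← pow_mul, mul_assoc, intervalIntegral.integral_const_mul]
        ring
end

section
/- Let M be a bounded open subset of ℝ², h > 0, and Ω = M × (−h, 0) ⊂ ℝ³. Let ψ : ℝ³ → ℝ be continuously differentiable. Then ∫_Ω ψ(x,y,z)⁶ dx dy dz ≤ 2h·∫_M ψ(x,y,0)⁶ dx dy + 9h²·∫_Ω ψ(x,y,z)⁴ (∂_z ψ(x,y,z))² dx dy dz. -/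
/-!
On each vertical segment put `u = ψ³`, so that `(∂_z u)² = 9 ψ⁴ (∂_z ψ)²`. Writing
`u z = u 0 - ∫_z^0 ∂_z u` and applying Cauchy–Schwarz gives
`u z ² ≤ 2 u 0 ² + 2 |z| ∫_{-h}^0 (∂_z u)²`; integrating over `z ∈ (-h, 0)` yields the
one-dimensional inequality `∫ u² ≤ 2 h u 0 ² + h² ∫ (∂_z u)²`, and Fubini integrates it over `M`.
-/

open MeasureTheory Set Bornology

theorem sq_setIntegral_le_measureReal_mul {α : Type*} [MeasurableSpace α] {μ : Measure α}
    {s : Set α} {g : α → ℝ} (hs : μ s ≠ ⊤)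
    (hg : IntegrableOn g s μ) (hg2 : IntegrableOn (fun x => g x ^ 2) s μ) :
    (∫ x in s, g x ∂μ) ^ 2 ≤ μ.real s * ∫ x in s, g x ^ 2 ∂μ := by
  rcases eq_or_ne (μ s) 0 with h0 | h0
  · simp [Measure.restrict_eq_zero.2 h0]
  have hm : 0 < μ.real s := ENNReal.toReal_pos h0 hs
  have jensen := (even_two.convexOn_pow (𝕜 := ℝ)).map_set_average_le (continuousOn_pow 2)
    isClosed_univ h0 hs (by simp) hg hg2
  rw [setAverage_eq, setAverage_eq, smul_eq_mul, smul_eq_mul] at jensen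
  have scaled := mul_le_mul_of_nonneg_left jensen (sq_nonneg (μ.real s))
  field_simp at scaled
  linarith

section Interval

variable {u : ℝ → ℝ} {a b : ℝ}

theorem sq_le_sq_right_add_integral_deriv_sq (hu : ContDiff ℝ 1 u) {z : ℝ} (hz : z ∈ Icc a b) :
    u z ^ 2 ≤ 2 * u b ^ 2 + 2 * (b - z) * ∫ s in Ioc a b, deriv u s ^ 2 := by
  have hu' : Continuous (deriv u) := hu.continuous_deriv le_rfl
  have ftc : u z = u b - ∫ s in z..b, deriv u s := by
    rw [intervalIntegral.integral_deriv_eq_sub (fun x _ => hu.differentiable one_ne_zero x)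
      (hu'.intervalIntegrable _ _)]
    ring
  have cauchySchwarz :
      (∫ s in z..b, deriv u s) ^ 2 ≤ (b - z) * ∫ s in Ioc z b, deriv u s ^ 2 := by
    rw [intervalIntegral.integral_of_le hz.2]
    simpa only [Real.volume_real_Ioc_of_le hz.2] using
      sq_setIntegral_le_measureReal_mul (μ := volume) (s := Ioc z b) measure_Ioc_lt_top.ne
        hu'.integrableOn_Ioc (hu'.pow 2).integrableOn_Ioc
  have mono : ∫ s in Ioc z b, deriv u s ^ 2 ≤ ∫ s in Ioc a b, deriv u s ^ 2 :=
    setIntegral_mono_set (hu'.pow 2).integrableOn_Ioc (.of_forall fun _ => sq_nonneg _)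
      (Ioc_subset_Ioc_left hz.1).eventuallyLE
  have bound : (∫ s in z..b, deriv u s) ^ 2 ≤ (b - z) * ∫ s in Ioc a b, deriv u s ^ 2 :=
    cauchySchwarz.trans (mul_le_mul_of_nonneg_left mono (sub_nonneg.2 hz.2))
  rw [ftc]
  nlinarith [sq_nonneg (u b + ∫ s in z..b, deriv u s)]

theorem integral_sq_le_sq_right_add_integral_deriv_sq (hu : ContDiff ℝ 1 u) (hab : a ≤ b) :
    ∫ z in Ioc a b, u z ^ 2 ≤
      2 * (b - a) * u b ^ 2 + (b - a) ^ 2 * ∫ z in Ioc a b, deriv u z ^ 2 := by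
  set B := ∫ z in Ioc a b, deriv u z ^ 2
  have hbound : Continuous fun z => 2 * u b ^ 2 + 2 * (b - z) * B := by fun_prop
  calc ∫ z in Ioc a b, u z ^ 2 ≤ ∫ z in Ioc a b, (2 * u b ^ 2 + 2 * (b - z) * B) :=
        setIntegral_mono_on (hu.continuous.pow 2).integrableOn_Ioc hbound.integrableOn_Ioc
          measurableSet_Ioc fun z hz =>
            sq_le_sq_right_add_integral_deriv_sq hu (Ioc_subset_Icc_self hz)
    _ = 2 * (b - a) * u b ^ 2 + (b - a) ^ 2 * B := by
        rw [← intervalIntegral.integral_of_le hab,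
          intervalIntegral.integral_add intervalIntegrable_const
            ((by fun_prop : Continuous fun z => 2 * (b - z) * B).intervalIntegrable _ _),
          intervalIntegral.integral_const, intervalIntegral.integral_mul_const,
          intervalIntegral.integral_const_mul,
          intervalIntegral.integral_comp_sub_left (fun x => x)]
        simp
        ring

theorem integral_pow_six_le_pow_six_right_add {f : ℝ → ℝ} (hf : ContDiff ℝ 1 f) (hab : a ≤ b) :
    ∫ z in Ioo a b, f z ^ 6 ≤
      2 * (b - a) * f b ^ 6 + 9 * (b - a) ^ 2 * ∫ z in Ioo a b, f z ^ 4 * deriv f z ^ 2 := by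
  have hderiv : ∀ z, deriv (fun z => f z ^ 3) z = 3 * f z ^ 2 * deriv f z := fun z => by
    simp [(hf.differentiable one_ne_zero z)]
  have hsq : ∀ z, (3 * f z ^ 2 * deriv f z) ^ 2 = 9 * (f z ^ 4 * deriv f z ^ 2) := fun z => by
    ring
  have := integral_sq_le_sq_right_add_integral_deriv_sq (hf.pow 3) hab
  simp only [hderiv, hsq, ← pow_mul, Nat.reduceMul, integral_const_mul,
    integral_Ioc_eq_integral_Ioo] at this
  linarith

end Interval

theorem Continuous.integrableOn_of_isBounded {X E : Type*} [PseudoMetricSpace X] [ProperSpace X]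
    [MeasurableSpace X] [OpensMeasurableSpace X] {μ : Measure X} [IsFiniteMeasureOnCompacts μ]
    [NormedAddCommGroup E] {f : X → E} (hf : Continuous f) {s : Set X} (hs : IsBounded s) :
    IntegrableOn f s μ :=
  (hf.continuousOn.integrableOn_compact' hs.isCompact_closure measurableSet_closure).mono_set
    subset_closure

section Cylinder

variable {α β γ E : Type*}

def prodCylinder (s : Set (α × β)) (t : Set γ) : Set (α × β × γ) :=
  {q | (q.1, q.2.1) ∈ s ∧ q.2.2 ∈ t}

variable {s : Set (α × β)} {t : Set γ}

theorem prodCylinder_eq_image_prodAssoc [MeasurableSpace α] [MeasurableSpace β]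
    [MeasurableSpace γ] :
    prodCylinder s t = MeasurableEquiv.prodAssoc '' (s ×ˢ t) := by
  ext ⟨x, y, z⟩
  simp [prodCylinder, MeasurableEquiv.prodAssoc]

theorem Bornology.IsBounded.prodCylinder [Bornology α] [Bornology β] [Bornology γ]
    (hs : IsBounded s) (ht : IsBounded t) : IsBounded (prodCylinder s t) :=
  isBounded_image_fst_and_snd.1
    ⟨hs.image_fst.subset (by rintro _ ⟨q, hq, rfl⟩; exact ⟨_, hq.1, rfl⟩),
      (hs.image_snd.prod ht).subset (by rintro _ ⟨q, hq, rfl⟩; exact ⟨⟨_, hq.1, rfl⟩, hq.2⟩)⟩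

variable [MeasureSpace α] [MeasureSpace β] [MeasureSpace γ] [SFinite (volume : Measure β)]
  [SFinite (volume : Measure γ)] [NormedAddCommGroup E] {f : α × β × γ → E}

theorem MeasureTheory.IntegrableOn.comp_prodAssoc (hf : IntegrableOn f (prodCylinder s t)) :
    IntegrableOn (fun p : (α × β) × γ => f (p.1.1, p.1.2, p.2)) (s ×ˢ t)
      ((volume : Measure (α × β)).prod volume) := by
  rw [prodCylinder_eq_image_prodAssoc, volume_preserving_prodAssoc.integrableOn_image
    (MeasurableEquiv.measurableEmbedding _)] at hf
  exact hf

variable [SFinite (volume : Measure α)] [NormedSpace ℝ E]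

theorem setIntegral_prodCylinder (hf : IntegrableOn f (prodCylinder s t)) :
    ∫ q in prodCylinder s t, f q = ∫ p in s, ∫ z in t, f (p.1, p.2, z) := by
  rw [prodCylinder_eq_image_prodAssoc, volume_preserving_prodAssoc.setIntegral_image_emb
    (MeasurableEquiv.measurableEmbedding _)]
  exact setIntegral_prod _ hf.comp_prodAssoc

theorem MeasureTheory.IntegrableOn.integral_prodCylinder_fiber
    (hf : IntegrableOn f (prodCylinder s t)) :
    IntegrableOn (fun p : α × β => ∫ z in t, f (p.1, p.2, z)) s := by
  have := hf.comp_prodAssoc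
  rw [IntegrableOn, ← Measure.prod_restrict] at this
  exact this.integral_prod_left

end Cylinder

theorem ContDiff.continuous_deriv_lastCoord {E F : Type*} [NormedAddCommGroup E]
    [NormedSpace ℝ E] [NormedAddCommGroup F] [NormedSpace ℝ F] {ψ : E × F × ℝ → ℝ}
    (hψ : ContDiff ℝ 1 ψ) :
    Continuous fun q : E × F × ℝ => deriv (fun z => ψ (q.1, q.2.1, z)) q.2.2 := by
  have hline (q : E × F × ℝ) :
      HasDerivAt (fun z : ℝ => (q.1, q.2.1, z)) ((0 : E), (0 : F), (1 : ℝ)) q.2.2 :=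
    (hasDerivAt_const _ _).prodMk ((hasDerivAt_const _ _).prodMk (hasDerivAt_id _))
  have hpartial (q : E × F × ℝ) :
      deriv (fun z => ψ (q.1, q.2.1, z)) q.2.2 = fderiv ℝ ψ q (0, 0, 1) :=
    ((hψ.differentiable one_ne_zero q).hasFDerivAt.comp_hasDerivAt q.2.2 (hline q)).deriv
  simp only [hpartial]
  exact (hψ.continuous_fderiv_apply one_ne_zero).comp (continuous_id.prodMk continuous_const)

theorem stmt_3_general (M : Set (ℝ × ℝ)) (hMb : Bornology.IsBounded M)
    (h : ℝ) (hh : 0 < h) (ψ : ℝ × ℝ × ℝ → ℝ) (hψ : ContDiff ℝ 1 ψ)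
    (Ω : Set (ℝ × ℝ × ℝ))
    (hΩ : Ω = {q : ℝ × ℝ × ℝ | (q.1, q.2.1) ∈ M ∧ q.2.2 ∈ Set.Ioo (-h) 0}) :
    (∫ q in Ω, (ψ q) ^ 6) ≤
      2 * h * (∫ q in M, (ψ (q.1, q.2, 0)) ^ 6)
        + 9 * h ^ 2 *
          ∫ q in Ω, (ψ q) ^ 4 * (deriv (fun z => ψ (q.1, q.2.1, z)) q.2.2) ^ 2 := by
  replace hΩ : Ω = prodCylinder M (Ioo (-h) 0) := hΩ
  have hΩb : IsBounded Ω := hΩ ▸ hMb.prodCylinder (Metric.isBounded_Ioo _ _)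
  have hint6 : IntegrableOn (fun q => ψ q ^ 6) Ω :=
    (hψ.continuous.pow 6).integrableOn_of_isBounded hΩb
  have hintD : IntegrableOn
      (fun q => ψ q ^ 4 * deriv (fun z => ψ (q.1, q.2.1, z)) q.2.2 ^ 2) Ω :=
    ((hψ.continuous.pow 4).mul
      (hψ.continuous_deriv_lastCoord.pow 2)).integrableOn_of_isBounded hΩb
  have hintTop : IntegrableOn (fun p : ℝ × ℝ => ψ (p.1, p.2, 0) ^ 6) M :=
    ((hψ.continuous.comp (by fun_prop)).pow 6).integrableOn_of_isBounded hMb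
  have column (p : ℝ × ℝ) : ∫ z in Ioo (-h) 0, ψ (p.1, p.2, z) ^ 6 ≤
      2 * h * ψ (p.1, p.2, 0) ^ 6 + 9 * h ^ 2 *
        ∫ z in Ioo (-h) 0, ψ (p.1, p.2, z) ^ 4 * deriv (fun z => ψ (p.1, p.2, z)) z ^ 2 := by
    simpa using integral_pow_six_le_pow_six_right_add (f := fun z => ψ (p.1, p.2, z))
      (hψ.comp (by fun_prop)) (neg_nonpos.2 hh.le)
  subst hΩ
  rw [setIntegral_prodCylinder hint6, setIntegral_prodCylinder hintD, ← integral_const_mul,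
    ← integral_const_mul, ← integral_add (hintTop.const_mul _)
      (hintD.integral_prodCylinder_fiber.const_mul _)]
  exact setIntegral_mono hint6.integral_prodCylinder_fiber
    ((hintTop.const_mul _).add (hintD.integral_prodCylinder_fiber.const_mul _)) column

/-- `L⁶` Poincaré-type inequality (P-6) on the cylinder `Ω = M × (-h, 0)`:
`∫_Ω ψ⁶ ≤ 2h ∫_M ψ(·,·,0)⁶ + 9h² ∫_Ω ψ⁴ (∂_z ψ)²`. -/
theorem stmt_3 (M : Set (ℝ × ℝ)) (hM : IsOpen M) (hMb : Bornology.IsBounded M)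
    (h : ℝ) (hh : 0 < h) (ψ : ℝ × ℝ × ℝ → ℝ) (hψ : ContDiff ℝ 1 ψ)
    (Ω : Set (ℝ × ℝ × ℝ))
    (hΩ : Ω = {q : ℝ × ℝ × ℝ | (q.1, q.2.1) ∈ M ∧ q.2.2 ∈ Set.Ioo (-h) 0}) :
    (∫ q in Ω, (ψ q) ^ 6) ≤
      2 * h * (∫ q in M, (ψ (q.1, q.2, 0)) ^ 6)
        + 9 * h ^ 2 *
          ∫ q in Ω, (ψ q) ^ 4 * (deriv (fun z => ψ (q.1, q.2.1, z)) q.2.2) ^ 2 :=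
  stmt_3_general M hMb h hh ψ hψ Ω hΩ
end

section
/- Let 𝒯 > 0, K > 0, and let y : [0, 𝒯] → ℝ be differentiable with y(t) > 0 and y′(t) ≤ K·y(t)³ for all t ∈ [0, 𝒯]. Then for every t ∈ [0, 𝒯] with t ≤ 3/(8K·y(0)²), one has y(t) ≤ 2·y(0). -/
/-- Nonlinear (cubic) differential inequality comparison underlying the
short-time `H¹` estimate (T-STAR-1)/(T-STAR)/(EST-L-2-m): if `y > 0` and
`y' ≤ K y³` on `[0, 𝒯]`, then `y(t) ≤ 2 y(0)` for `t ≤ 3/(8 K y(0)²)`. -/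
theorem stmt_13 (𝒯 K : ℝ) (h𝒯 : 0 < 𝒯) (hK : 0 < K) (y y' : ℝ → ℝ)
    (hy : ∀ t ∈ Set.Icc (0 : ℝ) 𝒯, HasDerivAt y (y' t) t)
    (hypos : ∀ t ∈ Set.Icc (0 : ℝ) 𝒯, 0 < y t)
    (hineq : ∀ t ∈ Set.Icc (0 : ℝ) 𝒯, y' t ≤ K * (y t) ^ 3) :
    ∀ t ∈ Set.Icc (0 : ℝ) 𝒯, t ≤ 3 / (8 * K * (y 0) ^ 2) → y t ≤ 2 * y 0 := by
  intro t ht hts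
  have hy0mem : (0:ℝ) ∈ Set.Icc (0:ℝ) 𝒯 := ⟨le_refl 0, h𝒯.le⟩
  set g : ℝ → ℝ := fun s => ((y s) ^ 2)⁻¹ + 2 * K * s with hg
  have hderiv : ∀ s ∈ Set.Icc (0:ℝ) 𝒯,
      HasDerivAt g (-((2:ℕ) * y s ^ 1 * y' s) / ((y s) ^ 2) ^ 2 + 2 * K) s := by
    intro s hs
    have hne : (y s) ^ 2 ≠ 0 := pow_ne_zero 2 (hypos s hs).ne'
    have h1 : HasDerivAt (fun u => ((y u) ^ 2)⁻¹)
        (-((2:ℕ) * y s ^ 1 * y' s) / ((y s) ^ 2) ^ 2) s := ((hy s hs).pow 2).inv hne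
    have h2 : HasDerivAt (fun u => 2 * K * u) (2 * K) s := by
      simpa using (hasDerivAt_id s).const_mul (2 * K)
    exact h1.add h2
  have hmono : MonotoneOn g (Set.Icc 0 𝒯) := by
    apply monotoneOn_of_deriv_nonneg (convex_Icc 0 𝒯)
    · exact fun s hs => ((hderiv s hs).continuousAt.continuousWithinAt)
    · intro s hs
      rw [interior_Icc] at hs
      exact ((hderiv s (Set.mem_Icc_of_Ioo hs)).differentiableAt).differentiableWithinAt
    · intro s hs
      rw [interior_Icc] at hs
      have hs' := Set.mem_Icc_of_Ioo hs
      rw [(hderiv s hs').deriv]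
      have hyp := hypos s hs'
      have hi := hineq s hs'
      have hb : (0:ℝ) < ((y s) ^ 2) ^ 2 := by positivity
      have key : (2:ℝ) * y s ^ 1 * y' s ≤ 2 * K * ((y s) ^ 2) ^ 2 := by
        nlinarith [sq_nonneg (y s), mul_le_mul_of_nonneg_left hi (le_of_lt hyp)]
      have : -((2:ℕ) * y s ^ 1 * y' s) / ((y s) ^ 2) ^ 2 ≥ -(2 * K) := by
        rw [ge_iff_le, neg_le, ← neg_div, neg_neg, div_le_iff₀ hb]
        push_cast
        linarith
      linarith
  have hg0 : g 0 ≤ g t := hmono hy0mem ht ht.1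
  have hy0 := hypos 0 hy0mem
  have hyt := hypos t ht
  have hA : (0:ℝ) < (y 0) ^ 2 := by positivity
  have hB : (0:ℝ) < (y t) ^ 2 := by positivity
  simp only [hg] at hg0
  -- 2 K t ≤ 3 / (4 (y 0)^2)
  have h2Kt : 2 * K * t ≤ 3 / (4 * (y 0) ^ 2) := by
    have h8 : (0:ℝ) < 8 * K * (y 0) ^ 2 := by positivity
    rw [div_eq_mul_inv] at hts ⊢
    have := mul_le_mul_of_nonneg_left hts (by positivity : (0:ℝ) ≤ 2 * K)
    calc 2 * K * t ≤ 2 * K * (3 * (8 * K * (y 0) ^ 2)⁻¹) := this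
      _ = 3 * (4 * (y 0) ^ 2)⁻¹ := by field_simp; ring
  -- so (y t)^2 ≤ 4 (y 0)^2
  have hinv : ((4:ℝ) * (y 0) ^ 2)⁻¹ ≤ ((y t) ^ 2)⁻¹ := by
    have : ((y 0) ^ 2)⁻¹ ≤ ((y t) ^ 2)⁻¹ + 3 / (4 * (y 0) ^ 2) := by linarith
    rw [div_eq_mul_inv] at this
    have h4A : (0:ℝ) < 4 * (y 0) ^ 2 := by positivity
    have e : ((y 0) ^ 2)⁻¹ - 3 * (4 * (y 0) ^ 2)⁻¹ = (4 * (y 0) ^ 2)⁻¹ := by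
      field_simp
      ring
    linarith [e ▸ this]
  have hB4 : (y t) ^ 2 ≤ 4 * (y 0) ^ 2 := by
    have h4A : (0:ℝ) < 4 * (y 0) ^ 2 := by positivity
    have h2 := inv_anti₀ (by positivity) hinv
    simpa using h2
  nlinarith [hB4, hy0, hyt]
end
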